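/- Let M_t be a random matrix and y a fixed vector such that E[yᵀ(M_t+M_tᵀ)y] ≥ 2μ‖y‖² and E[yᵀM_tᵀM_t y] ≤ c‖y‖² for constants μ, c > 0. Then for any step size β with 0 < β ≤ μ/c, E[‖(I−βM_t)y‖²] ≤ (1−βμ)‖y‖². -/

import Mathlib

open Matrix MeasureTheory

theorem stmt_4 {n : ℕ} {Ω : Type*} [MeasureSpace Ω]
    [IsProbabilityMeasure (volume : Measure Ω)]
    (M : Ω → Matrix (Fin n) (Fin n) ℝ) (y : Fin n → ℝ) (μ c β : ℝ)
    (hμ : 0 < μ) (hc : 0 < c) (hβ : 0 < β) (hβc : β ≤ μ / c)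
    (hint1 : Integrable (fun ω => y ⬝ᵥ ((M ω + (M ω)ᵀ) *ᵥ y)))
    (hint2 : Integrable (fun ω => y ⬝ᵥ (((M ω)ᵀ * M ω) *ᵥ y)))
    (h1 : 2 * μ * (y ⬝ᵥ y) ≤ ∫ ω, y ⬝ᵥ ((M ω + (M ω)ᵀ) *ᵥ y))
    (h2 : (∫ ω, y ⬝ᵥ (((M ω)ᵀ * M ω) *ᵥ y)) ≤ c * (y ⬝ᵥ y)) :
    (∫ ω, (y - β • (M ω *ᵥ y)) ⬝ᵥ (y - β • (M ω *ᵥ y))) ≤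
      (1 - β * μ) * (y ⬝ᵥ y) := by
  have key : ∀ ω, (y - β • (M ω *ᵥ y)) ⬝ᵥ (y - β • (M ω *ᵥ y)) =
      y ⬝ᵥ y - β * (y ⬝ᵥ ((M ω + (M ω)ᵀ) *ᵥ y))
        + β * β * (y ⬝ᵥ (((M ω)ᵀ * M ω) *ᵥ y)) := by
    intro ω
    have hsym : y ⬝ᵥ ((M ω)ᵀ *ᵥ y) = (M ω *ᵥ y) ⬝ᵥ y := by
      rw [Matrix.dotProduct_mulVec, Matrix.vecMul_transpose]
    have hquad : y ⬝ᵥ (((M ω)ᵀ * M ω) *ᵥ y) = (M ω *ᵥ y) ⬝ᵥ (M ω *ᵥ y) := by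
      rw [← Matrix.mulVec_mulVec, Matrix.dotProduct_mulVec, Matrix.vecMul_transpose]
    have hcomm : y ⬝ᵥ (M ω *ᵥ y) = (M ω *ᵥ y) ⬝ᵥ y := dotProduct_comm _ _
    simp only [Matrix.add_mulVec, dotProduct_add, dotProduct_sub, sub_dotProduct,
      dotProduct_smul, smul_dotProduct, smul_eq_mul, hquad, hsym, hcomm]
    ring
  have hI : (∫ ω, (y - β • (M ω *ᵥ y)) ⬝ᵥ (y - β • (M ω *ᵥ y))) =
      y ⬝ᵥ y - β * (∫ ω, y ⬝ᵥ ((M ω + (M ω)ᵀ) *ᵥ y))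
        + β * β * (∫ ω, y ⬝ᵥ (((M ω)ᵀ * M ω) *ᵥ y)) := by
    simp only [key]
    have hA : Integrable (fun ω => y ⬝ᵥ y - β * (y ⬝ᵥ ((M ω + (M ω)ᵀ) *ᵥ y))) :=
      (integrable_const _).sub (hint1.const_mul β)
    have hB : Integrable (fun ω => β * β * (y ⬝ᵥ (((M ω)ᵀ * M ω) *ᵥ y))) :=
      hint2.const_mul _
    rw [integral_add hA hB, integral_sub (integrable_const _) (hint1.const_mul β),
      integral_const_mul, integral_const_mul, integral_const, probReal_univ]
    simp
  rw [hI]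
  have hyy : 0 ≤ y ⬝ᵥ y := Finset.sum_nonneg fun i _ => mul_self_nonneg (y i)
  have h3 : β * β * (∫ ω, y ⬝ᵥ (((M ω)ᵀ * M ω) *ᵥ y)) ≤ β * β * (c * (y ⬝ᵥ y)) :=
    mul_le_mul_of_nonneg_left h2 (by positivity)
  have h4 : β * (2 * μ * (y ⬝ᵥ y)) ≤ β * ∫ ω, y ⬝ᵥ ((M ω + (M ω)ᵀ) *ᵥ y) :=
    mul_le_mul_of_nonneg_left h1 hβ.le
  have h5 : β * c ≤ μ := (le_div_iff₀ hc).mp hβc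
  nlinarith [mul_le_mul_of_nonneg_right (mul_le_mul_of_nonneg_left h5 hβ.le) hyy]
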